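/- arXiv:math/0506421 — 2 statements merged into one kernel-verified Lean document; each statement's English description precedes it below -/
import Mathlib

section
/- Let ℓ ≥ 1, n ≥ 1, and let C be a family of (ℓ+1)-element subsets of [n]. Then C satisfies condition (C_{ℓ+1}) if and only if there exists an ℓ-generic matroid on the ground set [n] whose family of circuits of cardinality ℓ+1 is exactly C. -/
noncomputable section

/-- `C` is a circuit of the matroid `M`: a minimal dependent subset of the ground set. -/
def IsCircuitF (M : Matroid ℕ) (C : Finset ℕ) : Prop :=
  ↑C ⊆ M.E ∧ ¬ M.Indep ↑C ∧ ∀ x ∈ C, M.Indep ↑(C.erase x)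

/-- `M` is `ℓ`-generic: it has no circuits of cardinality at most `ℓ`. -/
def GenericM (ℓ : ℕ) (M : Matroid ℕ) : Prop :=
  ∀ C : Finset ℕ, IsCircuitF M C → ℓ < C.card

/-- `M` has rank `r`: it has a base of cardinality `r`. -/
def HasRank (M : Matroid ℕ) (r : ℕ) : Prop :=
  ∃ B : Finset ℕ, M.IsBase ↑B ∧ B.card = r

/-- Condition `(C_{ℓ+1})` for a family `𝒞` of `(ℓ+1)`-element subsets:  whenever
`C₁, C₂ ∈ 𝒞` and `|C₁ ∪ C₂| = ℓ+2`, every `(ℓ+1)`-element subset of `C₁ ∪ C₂` is in `𝒞`. -/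
def CondC (ℓ : ℕ) (𝒞 : Set (Finset ℕ)) : Prop :=
  ∀ C₁ ∈ 𝒞, ∀ C₂ ∈ 𝒞, (C₁ ∪ C₂).card = ℓ + 2 →
    ∀ C₃ : Finset ℕ, C₃ ⊆ C₁ ∪ C₂ → C₃.card = ℓ + 1 → C₃ ∈ 𝒞

end


/-!
Given `(C_{ℓ+1})`, the `(ℓ+1)`-subsets of `E` outside `𝒞` are the bases of a paving matroid
whose independent sets are the sets of size at most `ℓ` together with these bases; its circuits
of size `ℓ + 1` are exactly the members of `𝒞`. The augmentation axiom comes down to one exchange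
fact: if `|I| = ℓ`, `|J| = ℓ + 1` and `I + e ∈ 𝒞` for every `e ∈ J \ I`, then `J ∈ 𝒞`, which
follows from `(C_{ℓ+1})` by moving `I` towards `J` one element at a time.

Conversely, in an `ℓ`-generic matroid two circuits `C₁, C₂` of size `ℓ + 1` with
`|C₁ ∪ C₂| = ℓ + 2` share an independent `ℓ`-set `C₁ ∩ C₂` that cannot be augmented inside
`C₁ ∪ C₂`, so every `(ℓ+1)`-subset of `C₁ ∪ C₂` is dependent; by genericity it is a circuit.
-/

open Finset

/-- The independent sets of the paving matroid on `E` whose bases are the `(ℓ+1)`-subsets of `E`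
not in `𝒞` (when `E` has at least `ℓ + 1` elements). -/
def PavingIndep (ℓ : ℕ) (𝒞 : Set (Finset ℕ)) (E : Set ℕ) (I : Finset ℕ) : Prop :=
  ↑I ⊆ E ∧ (I.card ≤ ℓ ∨ I.card = ℓ + 1 ∧ I ∉ 𝒞)

section PavingIndep

variable {ℓ : ℕ} {𝒞 : Set (Finset ℕ)} {E : Set ℕ}

lemma pavingIndep_empty : PavingIndep ℓ 𝒞 E ∅ :=
  ⟨by simp, Or.inl (by simp)⟩

lemma PavingIndep.subset {I J : Finset ℕ} (hJ : PavingIndep ℓ 𝒞 E J) (hIJ : I ⊆ J) :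
    PavingIndep ℓ 𝒞 E I := by
  obtain ⟨hJE, hJ⟩ := hJ
  refine ⟨(Finset.coe_subset.2 hIJ).trans hJE, ?_⟩
  have := card_le_card hIJ
  by_cases hIc : I.card = ℓ + 1
  · rwa [eq_of_subset_of_card_le hIJ (by omega)]
  · omega

end PavingIndep

namespace CondC

variable {ℓ : ℕ} {𝒞 : Set (Finset ℕ)}

lemma mem_of_subset_insert_insert (hC : CondC ℓ 𝒞) {I D : Finset ℕ} {a b : ℕ}
    (hI : I.card = ℓ) (ha : insert a I ∈ 𝒞) (hb : insert b I ∈ 𝒞) (hab : a ≠ b)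
    (haI : a ∉ I) (hbI : b ∉ I) (hD : D ⊆ insert a (insert b I)) (hDc : D.card = ℓ + 1) :
    D ∈ 𝒞 := by
  have hU : insert a I ∪ insert b I = insert a (insert b I) := by
    ext; simp only [mem_union, mem_insert]; tauto
  refine hC _ ha _ hb ?_ D (hU ▸ hD) hDc
  rw [hU, card_insert_of_notMem (by simp [hab, haI]), card_insert_of_notMem hbI, hI]

lemma mem_of_forall_insert_mem (hC : CondC ℓ 𝒞) {I J : Finset ℕ} (hI : I.card = ℓ)
    (hJ : J.card = ℓ + 1) (hIJ : ∀ e ∈ J, e ∉ I → insert e I ∈ 𝒞) : J ∈ 𝒞 := by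
  induction hk : (I \ J).card generalizing I with
  | zero =>
    obtain ⟨e, heJ, heI⟩ := exists_mem_notMem_of_card_lt_card (s := I) (t := J) (by omega)
    have hIJ' : I ⊆ J := sdiff_eq_empty_iff_subset.1 (card_eq_zero.1 hk)
    have : insert e I = J := eq_of_subset_of_card_le (insert_subset heJ hIJ')
      (by rw [card_insert_of_notMem heI]; omega)
    exact this ▸ hIJ e heJ heI
  | succ k ih =>
    obtain ⟨x, hx⟩ : (I \ J).Nonempty := card_pos.1 (by omega)
    obtain ⟨hxI, hxJ⟩ := mem_sdiff.1 hx
    obtain ⟨e₁, he₁J, he₁I⟩ := exists_mem_notMem_of_card_lt_card (s := I) (t := J) (by omega)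
    have he₁ : e₁ ∉ I.erase x := fun h ↦ he₁I (mem_of_mem_erase h)
    have hI' : (insert e₁ (I.erase x)).card = ℓ := by
      have := card_pos.2 ⟨x, hxI⟩
      rw [card_insert_of_notMem he₁, card_erase_of_mem hxI]; omega
    refine ih hI' (fun e heJ heI' ↦ ?_) ?_
    · have hee₁ : e ≠ e₁ := by rintro rfl; exact heI' (mem_insert_self _ _)
      have heI : e ∉ I := fun h ↦ heI' <|
        mem_insert_of_mem (mem_erase.2 ⟨fun hex ↦ hxJ (hex ▸ heJ), h⟩)
      refine hC.mem_of_subset_insert_insert hI (hIJ e₁ he₁J he₁I) (hIJ e heJ heI)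
        hee₁.symm he₁I heI ?_ (by rw [card_insert_of_notMem heI', hI'])
      intro y
      simp only [mem_insert, mem_erase]
      tauto
    · rw [insert_sdiff_of_mem _ he₁J, erase_sdiff_comm, card_erase_of_mem hx, hk]; rfl

lemma exists_pavingIndep_insert (hC : CondC ℓ 𝒞) {E : Set ℕ} {I J : Finset ℕ}
    (hI : PavingIndep ℓ 𝒞 E I) (hJ : PavingIndep ℓ 𝒞 E J) (hIJ : I.card < J.card) :
    ∃ e ∈ J, e ∉ I ∧ PavingIndep ℓ 𝒞 E (insert e I) := by
  obtain ⟨hIE, hI⟩ := hI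
  obtain ⟨hJE, hJ⟩ := hJ
  have insert_subset_E : ∀ e ∈ J, ↑(insert e I) ⊆ E := fun e he ↦ by
    rw [coe_insert]; exact Set.insert_subset (hJE he) hIE
  obtain ⟨e, heJ, heI⟩ := exists_mem_notMem_of_card_lt_card hIJ
  have hIe := card_insert_of_notMem heI
  by_cases hIc : I.card < ℓ
  · exact ⟨e, heJ, heI, insert_subset_E e heJ, Or.inl (by omega)⟩
  have hJc : J.card = ℓ + 1 := by omega
  by_contra h
  refine (hJ.resolve_left (by omega)).2 (hC.mem_of_forall_insert_mem (I := I) (by omega) hJc ?_)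
  intro f hfJ hfI
  by_contra hf
  exact h ⟨f, hfJ, hfI, insert_subset_E f hfJ,
    Or.inr ⟨by rw [card_insert_of_notMem hfI]; omega, hf⟩⟩

def matroid (hC : CondC ℓ 𝒞) (E : Set ℕ) : Matroid ℕ :=
  (IndepMatroid.ofFinset E (PavingIndep ℓ 𝒞 E) pavingIndep_empty
    (fun _ _ ↦ PavingIndep.subset) (fun _ _ ↦ hC.exists_pavingIndep_insert)
    (fun _ hI ↦ hI.1)).matroid

variable (hC : CondC ℓ 𝒞) (E : Set ℕ)

lemma matroid_indep_iff {I : Finset ℕ} :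
    (hC.matroid E).Indep ↑I ↔ PavingIndep ℓ 𝒞 E I := by
  rw [matroid, IndepMatroid.matroid_indep_iff, IndepMatroid.ofFinset_indep]

lemma genericM_matroid : GenericM ℓ (hC.matroid E) := by
  intro C ⟨hCE, hC_dep, _⟩
  by_contra! hCc
  exact hC_dep ((hC.matroid_indep_iff E).2 ⟨hCE, Or.inl hCc⟩)

lemma isCircuitF_matroid_iff (h𝒞 : ∀ C ∈ 𝒞, ↑C ⊆ E ∧ C.card = ℓ + 1) {D : Finset ℕ} :
    IsCircuitF (hC.matroid E) D ∧ D.card = ℓ + 1 ↔ D ∈ 𝒞 := by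
  constructor
  · rintro ⟨⟨hDE, hD_dep, -⟩, hDc⟩
    by_contra hD
    exact hD_dep ((hC.matroid_indep_iff E).2 ⟨hDE, Or.inr ⟨hDc, hD⟩⟩)
  · intro hD
    obtain ⟨hDE, hDc⟩ := h𝒞 D hD
    refine ⟨⟨hDE, fun h ↦ ?_, fun x hx ↦ (hC.matroid_indep_iff E).2 ⟨?_, Or.inl ?_⟩⟩, hDc⟩
    · rcases ((hC.matroid_indep_iff E).1 h).2 with hDc' | ⟨-, hD'⟩
      · omega
      · exact hD' hD
    · exact (Finset.coe_subset.2 (erase_subset x D)).trans hDE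
    · rw [card_erase_of_mem hx]; omega

end CondC

lemma isCircuitF_iff_isCircuit {M : Matroid ℕ} {C : Finset ℕ} :
    IsCircuitF M C ↔ M.IsCircuit ↑C := by
  rw [Matroid.isCircuit_iff_dep_forall_sdiff_singleton_indep, Matroid.Dep]
  simp only [IsCircuitF, Finset.coe_erase, Finset.mem_coe]
  tauto

lemma Matroid.Dep.exists_isCircuitF_subset {M : Matroid ℕ} {S : Finset ℕ} (hS : M.Dep ↑S) :
    ∃ C ⊆ S, IsCircuitF M C := by
  obtain ⟨C, hCS, hC⟩ := hS.exists_isCircuit_subset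
  obtain ⟨C, rfl⟩ := (S.finite_toSet.subset hCS).exists_finset_coe
  exact ⟨C, Finset.coe_subset.1 hCS, isCircuitF_iff_isCircuit.2 hC⟩

lemma Matroid.IsCircuit.dep_of_subset_union {α : Type*} [DecidableEq α] {M : Matroid α}
    {C₁ C₂ C₃ : Finset α} {k : ℕ} (h₁ : M.IsCircuit ↑C₁) (h₂ : M.IsCircuit ↑C₂)
    (hc₁ : C₁.card = k + 1) (hc₂ : C₂.card = k + 1) (hU : (C₁ ∪ C₂).card = k + 2)
    (hC₃ : C₃ ⊆ C₁ ∪ C₂) (hc₃ : C₃.card = k + 1) : M.Dep ↑C₃ := by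
  have hI : (C₁ ∩ C₂).card = k := by
    have := card_union_add_card_inter C₁ C₂
    omega
  have hI_indep : M.Indep ↑(C₁ ∩ C₂) :=
    h₁.ssubset_indep <| Finset.coe_ssubset.2 <|
      inter_subset_left.ssubset_of_ne fun h ↦ by rw [h] at hI; omega
  have hUE : ↑(C₁ ∪ C₂) ⊆ M.E := by
    rw [coe_union]; exact Set.union_subset h₁.subset_ground h₂.subset_ground
  refine ⟨fun h₃ ↦ ?_, (Finset.coe_subset.2 hC₃).trans hUE⟩
  obtain ⟨y, hy₃, hyI, hy⟩ := hI_indep.augment_finset h₃ (by omega)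
  -- `C₁ ∩ C₂ + y` is `C₁` or `C₂`, according to where `y` lies
  have absurd_of_mem : ∀ D : Finset α, M.IsCircuit ↑D → D.card = k + 1 → C₁ ∩ C₂ ⊆ D →
      y ∈ D → False := fun D hD hDc hID hyD ↦ by
    have : insert y (C₁ ∩ C₂) = D := eq_of_subset_of_card_le (insert_subset hyD hID)
      (by rw [card_insert_of_notMem hyI]; omega)
    exact hD.not_indep (by rwa [← this, coe_insert])
  rcases mem_union.1 (hC₃ hy₃) with hy₁ | hy₂
  · exact absurd_of_mem C₁ h₁ hc₁ inter_subset_left hy₁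
  · exact absurd_of_mem C₂ h₂ hc₂ inter_subset_right hy₂

lemma GenericM.condC {ℓ : ℕ} {M : Matroid ℕ} (hM : GenericM ℓ M) :
    CondC ℓ {C | IsCircuitF M C ∧ C.card = ℓ + 1} := by
  rintro C₁ ⟨h₁, hc₁⟩ C₂ ⟨h₂, hc₂⟩ hU C₃ hC₃ hc₃
  obtain ⟨D, hDC₃, hD⟩ := (isCircuitF_iff_isCircuit.1 h₁).dep_of_subset_union
    (isCircuitF_iff_isCircuit.1 h₂) hc₁ hc₂ hU hC₃ hc₃ |>.exists_isCircuitF_subset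
  have := hM D hD
  have hDC₃ : D = C₃ := eq_of_subset_of_card_le hDC₃ (by omega)
  exact ⟨hDC₃ ▸ hD, hc₃⟩

theorem condC_iff_exists_generic_matroid_general
    (ℓ n : ℕ) (𝒞 : Set (Finset ℕ))
    (h𝒞 : ∀ C ∈ 𝒞, C ⊆ Finset.Icc 1 n ∧ C.card = ℓ + 1) :
    CondC ℓ 𝒞 ↔
      ∃ M : Matroid ℕ, M.E = ↑(Finset.Icc 1 n) ∧ GenericM ℓ M ∧
        ∀ C : Finset ℕ, (IsCircuitF M C ∧ C.card = ℓ + 1) ↔ C ∈ 𝒞 := by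
  constructor
  · intro hC
    refine ⟨hC.matroid _, rfl, hC.genericM_matroid _, fun C ↦ hC.isCircuitF_matroid_iff _ ?_⟩
    exact fun C hC ↦ ⟨Finset.coe_subset.2 (h𝒞 C hC).1, (h𝒞 C hC).2⟩
  · rintro ⟨M, -, hM, hcirc⟩
    have h𝒞_eq : 𝒞 = {C | IsCircuitF M C ∧ C.card = ℓ + 1} := Set.ext fun C ↦ (hcirc C).symm
    exact h𝒞_eq ▸ hM.condC

theorem condC_iff_exists_generic_matroid
    (ℓ n : ℕ) (hℓ : 1 ≤ ℓ) (hn : 1 ≤ n) (𝒞 : Set (Finset ℕ))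
    (h𝒞 : ∀ C ∈ 𝒞, C ⊆ Finset.Icc 1 n ∧ C.card = ℓ + 1) :
    CondC ℓ 𝒞 ↔
      ∃ M : Matroid ℕ, M.E = ↑(Finset.Icc 1 n) ∧ GenericM ℓ M ∧
        ∀ C : Finset ℕ, (IsCircuitF M C ∧ C.card = ℓ + 1) ↔ C ∈ 𝒞 :=
  condC_iff_exists_generic_matroid_general ℓ n 𝒞 h𝒞
end

section
/- Let ℓ ≥ 1 and let C be a family of (ℓ+1)-element subsets of [n] satisfying condition (C_{ℓ+1}). For an ℓ-element subset I of [n] set X_I = I ∪ { e ∈ [n] : I ∪ {e} ∈ C }. Then every (ℓ+1)-element subset of X_I belongs to C. -/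
/-! Induct on `|S \ I|`. Pick `e ∈ S \ I`. If `S ⊆ I ∪ {e}`, then `S = I ∪ {e}` lies in `𝒞` by the
definition of `X_I`. Otherwise there is a second element `f ∈ S \ I` and, by counting, some
`x ∈ I \ S`. The sets `S - e + x` and `S - f + x` are closer to `I`, so they lie in `𝒞` by
induction; their union is `S + x`, of size `ℓ + 2`, and `(C_{ℓ+1})` puts `S` in `𝒞`. -/

open Finset

namespace CondC

variable {ℓ : ℕ} {𝒞 : Set (Finset ℕ)}

theorem mem_of_insert_erase_mem (hcond : CondC ℓ 𝒞) {S : Finset ℕ} {e f x : ℕ}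
    (hef : e ≠ f) (hxS : x ∉ S) (hS : #S = ℓ + 1)
    (he : insert x (S.erase e) ∈ 𝒞) (hf : insert x (S.erase f) ∈ 𝒞) : S ∈ 𝒞 := by
  have hunion : insert x (S.erase e) ∪ insert x (S.erase f) = insert x S := by
    ext y
    simp only [mem_union, mem_insert, mem_erase]
    grind
  refine hcond _ he _ hf ?_ S ?_ hS
  · rw [hunion, card_insert_of_notMem hxS, hS]
  · rw [hunion]
    exact subset_insert x S

theorem mem_of_forall_insert_mem_s2 (hcond : CondC ℓ 𝒞) {I : Finset ℕ} (hI : #I = ℓ)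
    {S : Finset ℕ} (hS : #S = ℓ + 1) (hins : ∀ e ∈ S, e ∉ I → insert e I ∈ 𝒞) : S ∈ 𝒞 := by
  induction hk : #(S \ I) using Nat.strong_induction_on generalizing S with
  | _ k ih =>
  obtain ⟨e, heS, heI⟩ : ∃ e ∈ S, e ∉ I :=
    not_subset.mp fun hSI => by have := card_le_card hSI; omega
  by_cases hsub : S ⊆ insert e I
  · have hSeq : S = insert e I :=
      eq_of_subset_of_card_le hsub (by rw [card_insert_of_notMem heI]; omega)
    exact hSeq ▸ hins e heS heI
  obtain ⟨f, hfS, hf⟩ := not_subset.mp hsub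
  have hfe : f ≠ e := fun h => hf (h ▸ mem_insert_self e I)
  have hfI : f ∉ I := fun h => hf (mem_insert_of_mem h)
  obtain ⟨x, hxI, hxS⟩ : ∃ x ∈ I, x ∉ S := not_subset.mp fun hIS => by
    have hsub' : insert f (insert e I) ⊆ S := insert_subset hfS (insert_subset heS hIS)
    have := card_le_card hsub'
    rw [card_insert_of_notMem hf, card_insert_of_notMem heI] at this
    omega
  have hexchange : ∀ a ∈ S, a ∉ I → insert x (S.erase a) ∈ 𝒞 := fun a haS haI => by
    have hsdiff : insert x (S.erase a) \ I ⊆ (S \ I).erase a := by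
      intro y
      simp only [mem_sdiff, mem_insert, mem_erase]
      grind
    refine ih _ ?_ ?_ (fun y hy hyI => hins y ?_ hyI) rfl
    · calc #(insert x (S.erase a) \ I) ≤ #((S \ I).erase a) := card_le_card hsdiff
        _ < k := hk ▸ card_erase_lt_of_mem (mem_sdiff.mpr ⟨haS, haI⟩)
    · rw [card_insert_of_notMem fun h => hxS (mem_of_mem_erase h), card_erase_of_mem haS, hS, Nat.add_sub_cancel]
    · exact (mem_sdiff.mp (mem_of_mem_erase (hsdiff (mem_sdiff.mpr ⟨hy, hyI⟩)))).1
  exact hcond.mem_of_insert_erase_mem hfe.symm hxS hS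
    (hexchange e heS heI) (hexchange f hfS hfI)

end CondC

theorem closure_subsets_in_family_general
    (ℓ n : ℕ) (𝒞 : Set (Finset ℕ))
    (hcond : CondC ℓ 𝒞)
    (I : Finset ℕ) (hIcard : I.card = ℓ)
    (X : Finset ℕ)
    (hX : ∀ x : ℕ, x ∈ X ↔ (x ∈ I ∨ (x ∈ Finset.Icc 1 n ∧ insert x I ∈ 𝒞)))
    (S : Finset ℕ) (hS : S ⊆ X) (hScard : S.card = ℓ + 1) :
    S ∈ 𝒞 :=
  hcond.mem_of_forall_insert_mem_s2 hIcard hScard fun e heS heI =>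
    (((hX e).mp (hS heS)).resolve_left heI).2

theorem closure_subsets_in_family
    (ℓ n : ℕ) (hℓ : 1 ≤ ℓ) (𝒞 : Set (Finset ℕ))
    (h𝒞 : ∀ C ∈ 𝒞, C ⊆ Finset.Icc 1 n ∧ C.card = ℓ + 1)
    (hcond : CondC ℓ 𝒞)
    (I : Finset ℕ) (hI : I ⊆ Finset.Icc 1 n) (hIcard : I.card = ℓ)
    (X : Finset ℕ)
    (hX : ∀ x : ℕ, x ∈ X ↔ (x ∈ I ∨ (x ∈ Finset.Icc 1 n ∧ insert x I ∈ 𝒞)))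
    (S : Finset ℕ) (hS : S ⊆ X) (hScard : S.card = ℓ + 1) :
    S ∈ 𝒞 :=
  closure_subsets_in_family_general ℓ n 𝒞 hcond I hIcard X hX S hS hScard
end
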